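/- arXiv:2010.02502 — 3 statements merged into one kernel-verified Lean document; each statement's English description precedes it below -/
import Mathlib

section
/- If x_{t-1} | x_t, x_0 is Gaussian with mean √(α_{t-1}) x_0 + √(1 - α_{t-1} - σ_t²) · (x_t - √(α_t) x_0)/√(1 - α_t) and covariance σ_t² I, and x_t | x_0 is Gaussian with mean √(α_t) x_0 and covariance (1 - α_t) I, then the marginal of x_{t-1} given x_0 is Gaussian with mean √(α_{t-1}) x_0 and covariance (1 - α_{t-1}) I. -/
/-!
The isotropic density factors over the coordinates, so by Fubini the marginalization reduces
to one dimension. There, with `c = √(1 - α_{t-1} - σ_t²) / √(1 - α_t)`, completing the square in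
`x` leaves a centred Gaussian in `y` of variance `σ_t² + c² (1 - α_t) = 1 - α_{t-1}`.
-/

open MeasureTheory Real Set

/-- Isotropic Gaussian probability density on `ℝ^d` with mean `μ` and covariance `s2 • I`. -/
noncomputable def gpdf {d : ℕ} (μ : EuclideanSpace ℝ (Fin d)) (s2 : ℝ)
    (x : EuclideanSpace ℝ (Fin d)) : ℝ :=
  (2 * Real.pi * s2) ^ (-(d : ℝ) / 2) * Real.exp (-‖x - μ‖ ^ 2 / (2 * s2))

noncomputable def gaussianDensity (s x : ℝ) : ℝ :=
  (√(2 * π * s))⁻¹ * exp (-x ^ 2 / (2 * s))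

theorem integral_gaussianDensity_sub_mul_mul {s₁ s₂ : ℝ} (h₁ : 0 < s₁) (h₂ : 0 < s₂) (c z : ℝ) :
    ∫ u, gaussianDensity s₁ (z - c * u) * gaussianDensity s₂ u =
      gaussianDensity (s₁ + c ^ 2 * s₂) z := by
  set S := s₁ + c ^ 2 * s₂
  have hS : 0 < S := by positivity
  set τ := s₁ * s₂ / S
  have hτ : 0 < τ := by positivity
  have hsquare : ∀ u, -(z - c * u) ^ 2 / (2 * s₁) + -u ^ 2 / (2 * s₂) =
      -z ^ 2 / (2 * S) + -(1 / (2 * τ)) * (u - c * s₂ * z / S) ^ 2 := by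
    intro u
    simp only [S, τ]
    field_simp
    ring
  have hgauss : ∫ u, exp (-(1 / (2 * τ)) * (u - c * s₂ * z / S) ^ 2) = √(2 * π * τ) := by
    rw [integral_sub_right_eq_self (fun u => exp (-(1 / (2 * τ)) * u ^ 2)), integral_gaussian]
    congr 1
    field_simp
  have hnorm : (√(2 * π * s₁))⁻¹ * (√(2 * π * s₂))⁻¹ * √(2 * π * τ) = (√(2 * π * S))⁻¹ := by
    have hprod : √(2 * π * τ) * √(2 * π * S) = √(2 * π * s₁) * √(2 * π * s₂) := by
      rw [← sqrt_mul (by positivity), ← sqrt_mul (by positivity)]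
      congr 1
      simp only [τ]
      field_simp
    have : 0 < √(2 * π * S) := sqrt_pos.2 (by positivity)
    field_simp
    linarith
  calc ∫ u, gaussianDensity s₁ (z - c * u) * gaussianDensity s₂ u
      = ∫ u, (√(2 * π * s₁))⁻¹ * (√(2 * π * s₂))⁻¹ * exp (-z ^ 2 / (2 * S)) *
          exp (-(1 / (2 * τ)) * (u - c * s₂ * z / S) ^ 2) := by
        congr 1 with u
        rw [gaussianDensity, gaussianDensity, mul_mul_mul_comm, ← exp_add, hsquare, exp_add]
        ring
    _ = gaussianDensity S z := by
        rw [integral_const_mul, hgauss, gaussianDensity, ← hnorm]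
        ring

theorem integral_gaussianDensity_affine_mul {s₁ s₂ : ℝ} (h₁ : 0 < s₁) (h₂ : 0 < s₂)
    (b c m z : ℝ) :
    ∫ x, gaussianDensity s₁ (z - (b + c * (x - m))) * gaussianDensity s₂ (x - m) =
      gaussianDensity (s₁ + c ^ 2 * s₂) (z - b) := by
  rw [integral_sub_right_eq_self
    (fun u => gaussianDensity s₁ (z - (b + c * u)) * gaussianDensity s₂ u) m]
  simpa only [sub_add_eq_sub_sub] using integral_gaussianDensity_sub_mul_mul h₁ h₂ c (z - b)

theorem gpdf_eq_prod_gaussianDensity {d : ℕ} (μ : EuclideanSpace ℝ (Fin d)) {s : ℝ} (hs : 0 ≤ s)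
    (x : EuclideanSpace ℝ (Fin d)) :
    gpdf μ s x = ∏ i, gaussianDensity s (x i - μ i) := by
  simp only [gpdf, gaussianDensity, Finset.prod_mul_distrib, Finset.prod_const, Finset.card_univ,
    Fintype.card_fin, ← exp_sum]
  congr 1
  · rw [sqrt_eq_rpow, ← rpow_neg (by positivity), ← rpow_natCast, ← rpow_mul (by positivity)]
    ring_nf
  · rw [EuclideanSpace.real_norm_sq_eq, neg_div, Finset.sum_div, ← Finset.sum_neg_distrib]
    simp only [PiLp.sub_apply, neg_div]

theorem EuclideanSpace.integral_prod_apply {ι 𝕜 : Type*} [Fintype ι] [RCLike 𝕜]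
    (f : ι → ℝ → 𝕜) :
    ∫ x : EuclideanSpace ℝ ι, ∏ i, f i (x i) = ∏ i, ∫ t, f i t := by
  rw [← (PiLp.volume_preserving_toLp ι).integral_comp
    (MeasurableEquiv.toLp 2 (ι → ℝ)).measurableEmbedding]
  exact integral_fintype_prod_volume_eq_prod f

theorem integral_gpdf_affine_mul_gpdf {d : ℕ} {s₁ s₂ : ℝ} (h₁ : 0 < s₁) (h₂ : 0 < s₂)
    (b m : EuclideanSpace ℝ (Fin d)) (c : ℝ) (y : EuclideanSpace ℝ (Fin d)) :
    ∫ x, gpdf (b + c • (x - m)) s₁ y * gpdf m s₂ x = gpdf b (s₁ + c ^ 2 * s₂) y := by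
  simp only [gpdf_eq_prod_gaussianDensity _ h₁.le, gpdf_eq_prod_gaussianDensity _ h₂.le,
    gpdf_eq_prod_gaussianDensity _ (by positivity : 0 ≤ s₁ + c ^ 2 * s₂), ← Finset.prod_mul_distrib,
    PiLp.add_apply, PiLp.smul_apply, PiLp.sub_apply, smul_eq_mul]
  rw [EuclideanSpace.integral_prod_apply
    (fun i t => gaussianDensity s₁ (y i - (b i + c * (t - m i))) * gaussianDensity s₂ (t - m i))]
  exact Finset.prod_congr rfl fun i _ => integral_gaussianDensity_affine_mul h₁ h₂ _ _ _ _

theorem ddim_reverse_marginal_general {d : ℕ} (x0 : EuclideanSpace ℝ (Fin d))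
    (αt αtm1 σt : ℝ) (hαt : αt ∈ Set.Ioo (0:ℝ) 1)
    (hσ : 0 < σt) (hσle : σt ^ 2 ≤ 1 - αtm1) :
    ∀ y : EuclideanSpace ℝ (Fin d),
      (∫ x : EuclideanSpace ℝ (Fin d),
        gpdf (Real.sqrt αtm1 • x0 + Real.sqrt (1 - αtm1 - σt ^ 2) •
          ((Real.sqrt (1 - αt))⁻¹ • (x - Real.sqrt αt • x0))) (σt ^ 2) y
          * gpdf (Real.sqrt αt • x0) (1 - αt) x)
        = gpdf (Real.sqrt αtm1 • x0) (1 - αtm1) y := by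
  intro y
  have hαt' : 0 < 1 - αt := sub_pos.2 hαt.2
  set c := √(1 - αtm1 - σt ^ 2) / √(1 - αt)
  have hmean : ∀ x : EuclideanSpace ℝ (Fin d),
      √(1 - αtm1 - σt ^ 2) • ((√(1 - αt))⁻¹ • (x - √αt • x0)) = c • (x - √αt • x0) := by
    intro x
    rw [smul_smul, ← div_eq_mul_inv]
  have hvar : σt ^ 2 + c ^ 2 * (1 - αt) = 1 - αtm1 := by
    rw [div_pow, sq_sqrt (by linarith), sq_sqrt hαt'.le]
    field_simp
    ring
  simp only [hmean]
  rw [integral_gpdf_affine_mul_gpdf (by positivity) hαt', hvar]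

/-- Gaussian marginalization for the DDIM reverse conditional: if
`x_{t-1} | x_t, x_0 ~ N(√α_{t-1} x_0 + √(1-α_{t-1}-σ²)·(x_t-√α_t x_0)/√(1-α_t), σ² I)` and
`x_t | x_0 ~ N(√α_t x_0, (1-α_t) I)`, then `x_{t-1} | x_0 ~ N(√α_{t-1} x_0, (1-α_{t-1}) I)`. -/
theorem ddim_reverse_marginal {d : ℕ} (x0 : EuclideanSpace ℝ (Fin d))
    (αt αtm1 σt : ℝ) (hαt : αt ∈ Set.Ioo (0:ℝ) 1) (hαtm1 : αtm1 ∈ Set.Ioc (0:ℝ) 1)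
    (hσ : 0 < σt) (hσle : σt ^ 2 ≤ 1 - αtm1) :
    ∀ y : EuclideanSpace ℝ (Fin d),
      (∫ x : EuclideanSpace ℝ (Fin d),
        gpdf (Real.sqrt αtm1 • x0 + Real.sqrt (1 - αtm1 - σt ^ 2) •
          ((Real.sqrt (1 - αt))⁻¹ • (x - Real.sqrt αt • x0))) (σt ^ 2) y
          * gpdf (Real.sqrt αt • x0) (1 - αt) x)
        = gpdf (Real.sqrt αtm1 • x0) (1 - αtm1) y :=
  ddim_reverse_marginal_general x0 αt αtm1 σt hαt hσ hσle
end

section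
/- For the one-dimensional case: if X_t = √(α_t) x_0 + √(1-α_t) ε with ε ~ N(0,1), and X_{t-1} = √(α_{t-1}) x_0 + √(1 - α_{t-1} - σ²) · (X_t - √(α_t) x_0)/√(1-α_t) + σ ε' with ε' ~ N(0,1) independent of ε, then X_{t-1} has distribution N(√(α_{t-1}) x_0, 1 - α_{t-1}). -/
open MeasureTheory ProbabilityTheory
open scoped NNReal

namespace ProbabilityTheory

variable {Ω : Type*} {mΩ : MeasurableSpace Ω} {P : Measure Ω}

lemma hasLaw_of_map_eq {𝓧 : Type*} {m𝓧 : MeasurableSpace 𝓧} {μ : Measure 𝓧}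
    [NeZero μ] {X : Ω → 𝓧} (h : P.map X = μ) : HasLaw X μ P where
  aemeasurable := .of_map_ne_zero (h ▸ NeZero.ne μ)
  map_eq := h

lemma IndepFun.hasLaw_const_mul_add_const_mul_gaussianReal {X Y : Ω → ℝ}
    {m₁ m₂ : ℝ} {v₁ v₂ : ℝ≥0} (hXY : IndepFun X Y P) (hX : HasLaw X (gaussianReal m₁ v₁) P)
    (hY : HasLaw Y (gaussianReal m₂ v₂) P) (a b : ℝ) :
    HasLaw (fun ω ↦ a * X ω + b * Y ω)
      (gaussianReal (a * m₁ + b * m₂) (⟨a ^ 2, sq_nonneg a⟩ * v₁ + ⟨b ^ 2, sq_nonneg b⟩ * v₂))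
      P where
  map_eq := gaussianReal_add_gaussianReal_of_indepFun
    (hXY.comp (measurable_const_mul a) (measurable_const_mul b))
    (gaussianReal_const_mul hX a).map_eq (gaussianReal_const_mul hY b).map_eq

end ProbabilityTheory

theorem ddim_one_dim_marginal_general {Ω : Type*} [MeasurableSpace Ω] (μ : Measure Ω)
    (ε ε' : Ω → ℝ)
    (hind : IndepFun ε ε' μ)
    (hε : Measure.map ε μ = gaussianReal 0 1) (hε' : Measure.map ε' μ = gaussianReal 0 1)
    (x0 αt αtm1 σ : ℝ) (hαt : αt ∈ Set.Ioo (0:ℝ) 1)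
    (hσle : σ ^ 2 ≤ 1 - αtm1) :
    Measure.map (fun ω =>
        Real.sqrt αtm1 * x0 + Real.sqrt (1 - αtm1 - σ ^ 2) *
          (((Real.sqrt αt * x0 + Real.sqrt (1 - αt) * ε ω) - Real.sqrt αt * x0)
            / Real.sqrt (1 - αt)) + σ * ε' ω) μ
      = gaussianReal (Real.sqrt αtm1 * x0) ((1 - αtm1).toNNReal) := by
  have hsqrt_ne : Real.sqrt (1 - αt) ≠ 0 := (Real.sqrt_pos.mpr (by linarith [hαt.2])).ne'
  have hlaw := gaussianReal_const_add
    (hind.hasLaw_const_mul_add_const_mul_gaussianReal (hasLaw_of_map_eq hε)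
      (hasLaw_of_map_eq hε') (Real.sqrt (1 - αtm1 - σ ^ 2)) σ) (Real.sqrt αtm1 * x0)
  convert hlaw.map_eq using 2
  · funext ω
    field_simp
    ring
  · ring
  · ext
    rw [Real.coe_toNNReal _ ((sq_nonneg σ).trans hσle)]
    change 1 - αtm1 = √(1 - αtm1 - σ ^ 2) ^ 2 * 1 + σ ^ 2 * 1
    rw [Real.sq_sqrt (sub_nonneg.mpr hσle)]
    ring

/-- One-dimensional DDIM marginal: with `X_t = √α_t x_0 + √(1-α_t) ε` and
`X_{t-1} = √α_{t-1} x_0 + √(1-α_{t-1}-σ²)·(X_t - √α_t x_0)/√(1-α_t) + σ ε'` for independent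
standard Gaussians `ε, ε'`, the law of `X_{t-1}` is `N(√α_{t-1} x_0, 1-α_{t-1})`. -/
theorem ddim_one_dim_marginal {Ω : Type*} [MeasurableSpace Ω] (μ : Measure Ω)
    [IsProbabilityMeasure μ] (ε ε' : Ω → ℝ) (hmε : Measurable ε) (hmε' : Measurable ε')
    (hind : IndepFun ε ε' μ)
    (hε : Measure.map ε μ = gaussianReal 0 1) (hε' : Measure.map ε' μ = gaussianReal 0 1)
    (x0 αt αtm1 σ : ℝ) (hαt : αt ∈ Set.Ioo (0:ℝ) 1) (hαtm1 : αtm1 ∈ Set.Ioc (0:ℝ) 1)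
    (hσ : 0 ≤ σ) (hσle : σ ^ 2 ≤ 1 - αtm1) :
    Measure.map (fun ω =>
        Real.sqrt αtm1 * x0 + Real.sqrt (1 - αtm1 - σ ^ 2) *
          (((Real.sqrt αt * x0 + Real.sqrt (1 - αt) * ε ω) - Real.sqrt αt * x0)
            / Real.sqrt (1 - αt)) + σ * ε' ω) μ
      = gaussianReal (Real.sqrt αtm1 * x0) ((1 - αtm1).toNNReal) :=
  ddim_one_dim_marginal_general μ ε ε' hind hε hε' x0 αt αtm1 σ hαt hσle
end

section
/- With the DDPM choice σ_t² = (1-α_{t-1})/(1-α_t) · (1 - α_t/α_{t-1}), the coefficient of x_t in the reverse conditional mean satisfies √(1 - α_{t-1} - σ_t²)/√(1 - α_t) = √(α_t/α_{t-1}) · (1 - α_{t-1})/(1 - α_t), and the coefficient of x_0 satisfies √(α_{t-1}) - √(1 - α_{t-1} - σ_t²)·√(α_t)/√(1-α_t) = √(α_{t-1})·(1 - α_t/α_{t-1})/(1 - α_t). -/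
/-!
The DDPM variance is chosen so that the remaining variance is a perfect square:
`1 - α_{t-1} - σ_t² = (1 - α_{t-1})² (α_t/α_{t-1}) / (1 - α_t)`.
Taking square roots, the `x_t` coefficient is immediate, and the `x_0` coefficient reduces to
`α_{t-1}(1 - α_t) - α_t(1 - α_{t-1}) = α_{t-1} - α_t` after clearing `√α_{t-1}(1 - α_t)`.
-/

open Real

lemma ddpm_variance_complement_eq {a b : ℝ} (ha : a ≠ 1) (hb : b ≠ 0) :
    1 - b - (1 - b) / (1 - a) * (1 - a / b) = (1 - b) ^ 2 * (a / b) / (1 - a) := by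
  have ha' : 1 - a ≠ 0 := sub_ne_zero.mpr ha.symm
  field_simp
  ring

lemma sqrt_ddpm_variance_complement {a b : ℝ} (ha : a < 1) (hb0 : b ≠ 0) (hb : b ≤ 1) :
    √(1 - b - (1 - b) / (1 - a) * (1 - a / b)) = (1 - b) * √(a / b) / √(1 - a) := by
  rw [ddpm_variance_complement_eq ha.ne hb0, sqrt_div' _ (sub_pos.mpr ha).le,
    sqrt_mul (sq_nonneg _), sqrt_sq (sub_nonneg.mpr hb)]

/-- With the DDPM choice `σ_t² = (1-α_{t-1})/(1-α_t)·(1-α_t/α_{t-1})`, the coefficient of `x_t` in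
the reverse conditional mean is `√(α_t/α_{t-1})·(1-α_{t-1})/(1-α_t)` and the coefficient of `x_0`
is `√(α_{t-1})·(1-α_t/α_{t-1})/(1-α_t)` (the DDPM posterior mean coefficients). -/
theorem ddim_mean_coefficients (αt αtm1 : ℝ) (h0 : 0 < αt) (h1 : αt < αtm1) (h2 : αtm1 ≤ 1) :
    Real.sqrt (1 - αtm1 - (1 - αtm1) / (1 - αt) * (1 - αt / αtm1)) / Real.sqrt (1 - αt)
        = Real.sqrt (αt / αtm1) * (1 - αtm1) / (1 - αt) ∧
    Real.sqrt αtm1 -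
        Real.sqrt (1 - αtm1 - (1 - αtm1) / (1 - αt) * (1 - αt / αtm1)) * Real.sqrt αt
          / Real.sqrt (1 - αt)
        = Real.sqrt αtm1 * (1 - αt / αtm1) / (1 - αt) := by
  have hb : 0 < αtm1 := h0.trans h1
  have ha : αt < 1 := h1.trans_le h2
  have h1a : 0 < 1 - αt := sub_pos.mpr ha
  rw [sqrt_ddpm_variance_complement ha hb.ne' h2]
  constructor
  · rw [div_div, mul_self_sqrt h1a.le]
    ring
  · rw [sqrt_div' _ hb.le]
    field_simp
    rw [sq_sqrt h1a.le, sq_sqrt h0.le, sq_sqrt hb.le]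
    ring
end
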